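/- Let f : [0,∞) → ℂ be smooth with compact support and f(0) = 0, and let α = e^{2πi/3}. Then for each x > 0, the contour integral over the boundary Γ₁ of the sector {λ : π/3 ≤ arg λ ≤ 2π/3} of e^{iλx} ζ₁(λ) dλ vanishes, where ζ₁(λ) = -α f̂(αλ) - α² f̂(α²λ) and f̂(μ) = ∫₀^∞ e^{-iμx} f(x) dx. Concretely: lim_{R→∞} ∫ over the two rays [0, Re^{2πi/3}] and [Re^{iπ/3}, 0] of e^{iλx} ζ₁(λ) dλ = 0. -/

import Mathlib

open Complex MeasureTheory Set Filter

/-- The cube root of unity `α = e^{2πi/3}`. -/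
noncomputable def cubeRoot : ℂ := Complex.exp (2 * Real.pi * Complex.I / 3)

/-- The half-line Fourier transform `f̂(μ) = ∫₀^∞ e^{-iμx} f(x) dx`. -/
noncomputable def fhat (f : ℝ → ℂ) (μ : ℂ) : ℂ :=
  ∫ x in Ioi (0:ℝ), Complex.exp (-Complex.I * μ * x) * f x

/-- `ζ₁(λ) = -α f̂(αλ) - α² f̂(α²λ)`. -/
noncomputable def zeta1 (f : ℝ → ℂ) (lam : ℂ) : ℂ :=
  -(cubeRoot * fhat f (cubeRoot * lam)) - cubeRoot ^ 2 * fhat f (cubeRoot ^ 2 * lam)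

/-! ### Auxiliary lemmas -/

/-- `∫₀^∞ e^{rc} dr = -c⁻¹` when `Re c < 0`. -/
lemma exp_integral_Ioi {c : ℂ} (hc : c.re < 0) :
    ∫ r in Ioi (0:ℝ), Complex.exp (r * c) = -c⁻¹ := by
  have hc0 : c ≠ 0 := by
    intro h; rw [h] at hc; simp at hc
  have hint : IntegrableOn (fun r : ℝ => Complex.exp (r * c)) (Ioi 0) := by
    have hexp : IntegrableOn (fun r : ℝ => Real.exp (-(-c.re) * r)) (Ioi 0) :=
      exp_neg_integrableOn_Ioi 0 (by linarith)
    refine hexp.integrable.mono ?_ ?_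
    · exact (Complex.continuous_exp.comp (continuous_ofReal.mul continuous_const)).aestronglyMeasurable
    · filter_upwards with r
      have : ‖Complex.exp (↑r * c)‖ = Real.exp ((↑r * c).re) := by
        rw [Complex.norm_exp]
      rw [this]
      simp only [Complex.mul_re, Complex.ofReal_re, Complex.ofReal_im, zero_mul, sub_zero,
        neg_neg, Real.norm_eq_abs, Real.abs_exp]
      exact le_of_eq (by ring_nf)
  have hderiv : ∀ r ∈ Ici (0:ℝ),
      HasDerivAt (fun r : ℝ => c⁻¹ * Complex.exp (r * c)) (Complex.exp (r * c)) r := by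
    intro r _
    have h1 : HasDerivAt (fun w : ℂ => Complex.exp (w * c)) (Complex.exp (↑r * c) * c) (r : ℂ) := by
      exact (Complex.hasDerivAt_exp ((r : ℂ) * c)).comp (r : ℂ) (hasDerivAt_mul_const c)
    have h2 : HasDerivAt (fun t : ℝ => Complex.exp (↑t * c)) (Complex.exp (↑r * c) * c) r :=
      h1.comp_ofReal
    have h3 := h2.const_mul c⁻¹
    rw [show c⁻¹ * (cexp (↑r * c) * c) = cexp (↑r * c) by
      rw [mul_comm (cexp _) c, ← mul_assoc, inv_mul_cancel₀ hc0, one_mul]] at h3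
    exact h3
  have htend : Tendsto (fun r : ℝ => c⁻¹ * Complex.exp (↑r * c)) atTop (nhds 0) := by
    rw [tendsto_zero_iff_norm_tendsto_zero]
    have : (fun r : ℝ => ‖c⁻¹ * Complex.exp (↑r * c)‖)
        = fun r : ℝ => ‖c⁻¹‖ * Real.exp (r * c.re) := by
      funext r
      rw [norm_mul]
      congr 1
      rw [Complex.norm_exp]
      congr 1
      simp [Complex.mul_re]
    rw [this]
    have h4 : Tendsto (fun r : ℝ => r * c.re) atTop atBot :=
      tendsto_id.atTop_mul_const_of_neg hc
    simpa using (Real.tendsto_exp_atBot.comp h4).const_mul ‖c⁻¹‖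
  have := integral_Ioi_of_hasDerivAt_of_tendsto' hderiv hint htend
  rw [this]
  simp

/-- Rewriting one piece of the ray integrand as an integral in `y`. -/
lemma fhat_piece_eq (f : ℝ → ℂ) (x : ℝ) (ω β : ℂ) (r : ℝ) :
    Complex.exp (Complex.I * (↑r * ω) * ↑x) * fhat f (β * (↑r * ω)) * ω
      = ∫ y in Ioi (0:ℝ),
          Complex.exp (Complex.I * (↑r * ω) * ↑x - Complex.I * (β * (↑r * ω)) * ↑y) * f y * ω := by
  rw [fhat, ← MeasureTheory.integral_const_mul, ← MeasureTheory.integral_mul_const]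
  refine setIntegral_congr_fun measurableSet_Ioi (fun y _ => ?_)
  rw [sub_eq_add_neg, Complex.exp_add]
  ring_nf

/-- Product integrability of the double-integral integrand. -/
lemma piece_integrable_prod (f : ℝ → ℂ) (hfc : Continuous f) (hsupp : HasCompactSupport f)
    (x : ℝ) (hx : 0 < x) (ω β : ℂ) (hω : 0 < ω.im) (hβ : (β * ω).im ≤ 0) :
    Integrable (fun p : ℝ × ℝ =>
        Complex.exp (Complex.I * (↑p.1 * ω) * ↑x - Complex.I * (β * (↑p.1 * ω)) * ↑p.2)
          * f p.2 * ω)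
      ((volume.restrict (Ioi (0:ℝ))).prod (volume.restrict (Ioi (0:ℝ)))) := by
  have hcont : Continuous (fun p : ℝ × ℝ =>
      Complex.exp (Complex.I * (↑p.1 * ω) * ↑x - Complex.I * (β * (↑p.1 * ω)) * ↑p.2)
        * f p.2 * ω) := by
    apply Continuous.mul _ continuous_const
    apply Continuous.mul _ (hfc.comp continuous_snd)
    apply Complex.continuous_exp.comp
    fun_prop
  have hb1 : IntegrableOn (fun r : ℝ => Real.exp (-(x * ω.im) * r)) (Ioi (0:ℝ)) :=
    exp_neg_integrableOn_Ioi 0 (mul_pos hx hω)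
  have hb2 : Integrable (fun y : ℝ => ‖ω‖ * ‖f y‖) (volume.restrict (Ioi (0:ℝ))) :=
    (((hfc.integrable_of_hasCompactSupport hsupp).norm.const_mul ‖ω‖)).restrict
  have hbound := hb1.integrable.mul_prod hb2
  refine hbound.mono hcont.aestronglyMeasurable ?_
  rw [Measure.prod_restrict]
  filter_upwards [ae_restrict_mem (measurableSet_Ioi.prod measurableSet_Ioi)] with p hp
  obtain ⟨hp1, hp2⟩ := hp
  have hp1' : (0:ℝ) < p.1 := hp1
  have hp2' : (0:ℝ) < p.2 := hp2
  have hre : (Complex.I * (↑p.1 * ω) * ↑x - Complex.I * (β * (↑p.1 * ω)) * ↑p.2).re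
      = -(p.1 * x * ω.im) + p.1 * p.2 * (β * ω).im := by
    simp [Complex.mul_re, Complex.mul_im, Complex.I_re, Complex.I_im]
    ring
  have hle : (Complex.I * (↑p.1 * ω) * ↑x - Complex.I * (β * (↑p.1 * ω)) * ↑p.2).re
      ≤ -(x * ω.im) * p.1 := by
    rw [hre]
    have : p.1 * p.2 * (β * ω).im ≤ 0 :=
      mul_nonpos_of_nonneg_of_nonpos (by positivity) hβ
    nlinarith
  calc ‖Complex.exp (Complex.I * (↑p.1 * ω) * ↑x - Complex.I * (β * (↑p.1 * ω)) * ↑p.2)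
        * f p.2 * ω‖
      = Real.exp ((Complex.I * (↑p.1 * ω) * ↑x - Complex.I * (β * (↑p.1 * ω)) * ↑p.2).re)
          * ‖f p.2‖ * ‖ω‖ := by
        rw [norm_mul, norm_mul, Complex.norm_exp]
    _ ≤ Real.exp (-(x * ω.im) * p.1) * ‖f p.2‖ * ‖ω‖ := by
        gcongr
    _ = ‖Real.exp (-(x * ω.im) * p.1) * (‖ω‖ * ‖f p.2‖)‖ := by
        rw [Real.norm_eq_abs, _root_.abs_of_nonneg (by positivity)]
        ring

/-- Integrability of one piece of the ray integrand. -/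
lemma piece_integrable (f : ℝ → ℂ) (hfc : Continuous f) (hsupp : HasCompactSupport f)
    (x : ℝ) (hx : 0 < x) (ω β : ℂ) (hω : 0 < ω.im) (hβ : (β * ω).im ≤ 0) :
    IntegrableOn (fun r : ℝ =>
        Complex.exp (Complex.I * (↑r * ω) * ↑x) * fhat f (β * (↑r * ω)) * ω) (Ioi (0:ℝ)) := by
  have h := (piece_integrable_prod f hfc hsupp x hx ω β hω hβ).integral_prod_left
  refine h.congr (Eventually.of_forall fun r => ?_)
  exact (fhat_piece_eq f x ω β r).symm

/-- The value of the ray integral of one piece: it does not depend on the direction `ω`. -/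
lemma ray_eq (f : ℝ → ℂ) (hfc : Continuous f) (hsupp : HasCompactSupport f)
    (x : ℝ) (hx : 0 < x) (ω β : ℂ) (hω : 0 < ω.im) (hβ : (β * ω).im ≤ 0) :
    ∫ r in Ioi (0:ℝ), Complex.exp (Complex.I * (↑r * ω) * ↑x) * fhat f (β * (↑r * ω)) * ω
      = ∫ y in Ioi (0:ℝ), f y / (Complex.I * (β * ↑y - ↑x)) := by
  have hω0 : ω ≠ 0 := by
    intro h; rw [h] at hω; simp at hω
  have step1 : (∫ r in Ioi (0:ℝ),
      Complex.exp (Complex.I * (↑r * ω) * ↑x) * fhat f (β * (↑r * ω)) * ω)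
      = ∫ r in Ioi (0:ℝ), ∫ y in Ioi (0:ℝ),
          Complex.exp (Complex.I * (↑r * ω) * ↑x - Complex.I * (β * (↑r * ω)) * ↑y)
            * f y * ω := by
    exact setIntegral_congr_fun measurableSet_Ioi (fun r _ => fhat_piece_eq f x ω β r)
  rw [step1]
  rw [MeasureTheory.integral_integral_swap (piece_integrable_prod f hfc hsupp x hx ω β hω hβ)]
  refine setIntegral_congr_fun measurableSet_Ioi (fun y hy => ?_)
  have hy' : (0:ℝ) < y := hy
  set c : ℂ := Complex.I * ω * ↑x - Complex.I * (β * ω) * ↑y with hcdef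
  have harg : ∀ r : ℝ,
      Complex.I * (↑r * ω) * ↑x - Complex.I * (β * (↑r * ω)) * ↑y = ↑r * c := by
    intro r; rw [hcdef]; ring
  have hcre : c.re < 0 := by
    have : c.re = -(x * ω.im) + y * (β * ω).im := by
      rw [hcdef]
      simp [Complex.mul_re, Complex.mul_im, Complex.I_re, Complex.I_im]
      ring
    rw [this]
    have h1 : y * (β * ω).im ≤ 0 := mul_nonpos_of_nonneg_of_nonpos hy'.le hβ
    nlinarith
  calc (∫ r in Ioi (0:ℝ),
        Complex.exp (Complex.I * (↑r * ω) * ↑x - Complex.I * (β * (↑r * ω)) * ↑y) * f y * ω)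
      = ∫ r in Ioi (0:ℝ), Complex.exp (↑r * c) * (f y * ω) := by
        refine setIntegral_congr_fun measurableSet_Ioi (fun r _ => ?_)
        rw [harg r, mul_assoc]
    _ = (∫ r in Ioi (0:ℝ), Complex.exp (↑r * c)) * (f y * ω) :=
        MeasureTheory.integral_mul_const _ _
    _ = (-c⁻¹) * (f y * ω) := by rw [exp_integral_Ioi hcre]
    _ = f y / (Complex.I * (β * ↑y - ↑x)) := by
        have hkey : c = -ω * (Complex.I * (β * ↑y - ↑x)) := by rw [hcdef]; ring
        have hd : Complex.I * (β * ↑y - ↑x) ≠ 0 := by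
          intro h
          rw [hkey, h, mul_zero] at hcre
          simp at hcre
        rw [hkey]
        field_simp

/-- Ray integral of the full integrand: integrability together with the value,
which is independent of the direction `ω`. -/
lemma ray_zeta (f : ℝ → ℂ) (hfc : Continuous f) (hsupp : HasCompactSupport f)
    (x : ℝ) (hx : 0 < x) (ω : ℂ) (hω : 0 < ω.im)
    (h1 : (cubeRoot * ω).im ≤ 0) (h2 : (cubeRoot ^ 2 * ω).im ≤ 0) :
    IntegrableOn (fun r : ℝ =>
        Complex.exp (Complex.I * (↑r * ω) * ↑x) * zeta1 f (↑r * ω) * ω) (Ioi (0:ℝ)) ∧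
    (∫ r in Ioi (0:ℝ), Complex.exp (Complex.I * (↑r * ω) * ↑x) * zeta1 f (↑r * ω) * ω)
      = -(cubeRoot * ∫ y in Ioi (0:ℝ), f y / (Complex.I * (cubeRoot * ↑y - ↑x)))
        - cubeRoot ^ 2 * ∫ y in Ioi (0:ℝ), f y / (Complex.I * (cubeRoot ^ 2 * ↑y - ↑x)) := by
  have hP1 := piece_integrable f hfc hsupp x hx ω cubeRoot hω h1
  have hP2 := piece_integrable f hfc hsupp x hx ω (cubeRoot ^ 2) hω h2
  have hpt : ∀ r : ℝ,
      Complex.exp (Complex.I * (↑r * ω) * ↑x) * zeta1 f (↑r * ω) * ω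
      = -(cubeRoot * (Complex.exp (Complex.I * (↑r * ω) * ↑x)
            * fhat f (cubeRoot * (↑r * ω)) * ω))
        - cubeRoot ^ 2 * (Complex.exp (Complex.I * (↑r * ω) * ↑x)
            * fhat f (cubeRoot ^ 2 * (↑r * ω)) * ω) := by
    intro r
    rw [zeta1]
    ring
  have hA : IntegrableOn (fun r : ℝ => -(cubeRoot * (Complex.exp (Complex.I * (↑r * ω) * ↑x)
      * fhat f (cubeRoot * (↑r * ω)) * ω))) (Ioi (0:ℝ)) := (hP1.const_mul cubeRoot).neg
  have hB : IntegrableOn (fun r : ℝ => cubeRoot ^ 2 * (Complex.exp (Complex.I * (↑r * ω) * ↑x)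
      * fhat f (cubeRoot ^ 2 * (↑r * ω)) * ω)) (Ioi (0:ℝ)) := hP2.const_mul (cubeRoot ^ 2)
  constructor
  · refine ((hA.sub hB).congr (Eventually.of_forall fun r => ?_))
    exact (hpt r).symm
  · calc (∫ r in Ioi (0:ℝ), Complex.exp (Complex.I * (↑r * ω) * ↑x) * zeta1 f (↑r * ω) * ω)
        = ∫ r in Ioi (0:ℝ),
            (-(cubeRoot * (Complex.exp (Complex.I * (↑r * ω) * ↑x)
                * fhat f (cubeRoot * (↑r * ω)) * ω))
              - cubeRoot ^ 2 * (Complex.exp (Complex.I * (↑r * ω) * ↑x)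
                * fhat f (cubeRoot ^ 2 * (↑r * ω)) * ω)) :=
          setIntegral_congr_fun measurableSet_Ioi (fun r _ => hpt r)
      _ = -(cubeRoot * ∫ r in Ioi (0:ℝ), Complex.exp (Complex.I * (↑r * ω) * ↑x)
                * fhat f (cubeRoot * (↑r * ω)) * ω)
            - cubeRoot ^ 2 * ∫ r in Ioi (0:ℝ), Complex.exp (Complex.I * (↑r * ω) * ↑x)
                * fhat f (cubeRoot ^ 2 * (↑r * ω)) * ω := by
          rw [MeasureTheory.integral_sub hA hB, MeasureTheory.integral_neg,
            MeasureTheory.integral_const_mul, MeasureTheory.integral_const_mul]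
      _ = -(cubeRoot * ∫ y in Ioi (0:ℝ), f y / (Complex.I * (cubeRoot * ↑y - ↑x)))
            - cubeRoot ^ 2 * ∫ y in Ioi (0:ℝ), f y / (Complex.I * (cubeRoot ^ 2 * ↑y - ↑x)) := by
          rw [ray_eq f hfc hsupp x hx ω cubeRoot hω h1,
            ray_eq f hfc hsupp x hx ω (cubeRoot ^ 2) hω h2]

/-- for `f ∈ C₀^∞[0,∞)` with `f(0)=0` and `x > 0`, the integral of
`e^{iλx} ζ₁(λ)` over the boundary `Γ₁` of the sector `π/3 ≤ arg λ ≤ 2π/3` (out along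
the ray `arg λ = 2π/3`, back along the ray `arg λ = π/3`) vanishes in the limit `R → ∞`. -/
theorem zeta1_contour_integral_vanishes
    (f : ℝ → ℂ) (hf : ContDiff ℝ (⊤ : ℕ∞) f) (hsupp : HasCompactSupport f) (hbc : f 0 = 0)
    (x : ℝ) (hx : 0 < x) :
    Tendsto (fun R : ℝ =>
      (∫ r in Ioo (0:ℝ) R,
          Complex.exp (Complex.I * ((r : ℂ) * Complex.exp (2 * Real.pi * Complex.I / 3)) * x) *
            zeta1 f ((r : ℂ) * Complex.exp (2 * Real.pi * Complex.I / 3)) *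
            Complex.exp (2 * Real.pi * Complex.I / 3))
      - (∫ r in Ioo (0:ℝ) R,
          Complex.exp (Complex.I * ((r : ℂ) * Complex.exp (Real.pi * Complex.I / 3)) * x) *
            zeta1 f ((r : ℂ) * Complex.exp (Real.pi * Complex.I / 3)) *
            Complex.exp (Real.pi * Complex.I / 3)))
      atTop (nhds 0) := by
  have hfc : Continuous f := hf.continuous
  have pi_pos := Real.pi_pos
  set ω₁ : ℂ := Complex.exp (2 * Real.pi * Complex.I / 3) with hω₁def
  set ω₂ : ℂ := Complex.exp (Real.pi * Complex.I / 3) with hω₂def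
  -- imaginary parts of the directions
  have he1 : ω₁ = Complex.exp (((2 * Real.pi / 3 : ℝ) : ℂ) * Complex.I) := by
    rw [hω₁def]; congr 1; push_cast; ring
  have he2 : ω₂ = Complex.exp (((Real.pi / 3 : ℝ) : ℂ) * Complex.I) := by
    rw [hω₂def]; congr 1; push_cast; ring
  have him1 : 0 < ω₁.im := by
    rw [he1, Complex.exp_ofReal_mul_I_im]
    exact Real.sin_pos_of_pos_of_lt_pi (by positivity) (by linarith)
  have him2 : 0 < ω₂.im := by
    rw [he2, Complex.exp_ofReal_mul_I_im]
    exact Real.sin_pos_of_pos_of_lt_pi (by positivity) (by linarith)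
  -- imaginary parts of `α·ω` and `α²·ω` are nonpositive
  have hcr2 : cubeRoot ^ 2 = Complex.exp (4 * Real.pi * Complex.I / 3) := by
    rw [cubeRoot, sq, ← Complex.exp_add]; congr 1; ring
  have hαω₁ : (cubeRoot * ω₁).im ≤ 0 := by
    have : cubeRoot * ω₁ = Complex.exp (((-(2 * Real.pi / 3) : ℝ) : ℂ) * Complex.I) := by
      rw [cubeRoot, hω₁def, ← Complex.exp_add]
      rw [show (2 * (Real.pi:ℂ) * Complex.I / 3 + 2 * (Real.pi:ℂ) * Complex.I / 3)
          = ((-(2 * Real.pi / 3) : ℝ) : ℂ) * Complex.I + 2 * (Real.pi:ℂ) * Complex.I by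
        push_cast; ring]
      rw [Complex.exp_add, Complex.exp_two_pi_mul_I, mul_one]
    rw [this, Complex.exp_ofReal_mul_I_im, Real.sin_neg, neg_nonpos]
    exact Real.sin_nonneg_of_nonneg_of_le_pi (by positivity) (by linarith)
  have hα2ω₁ : (cubeRoot ^ 2 * ω₁).im ≤ 0 := by
    have : cubeRoot ^ 2 * ω₁ = 1 := by
      rw [hcr2, hω₁def, ← Complex.exp_add]
      rw [show (4 * (Real.pi:ℂ) * Complex.I / 3 + 2 * (Real.pi:ℂ) * Complex.I / 3)
          = 2 * (Real.pi:ℂ) * Complex.I by ring]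
      exact Complex.exp_two_pi_mul_I
    rw [this]; simp
  have hαω₂ : (cubeRoot * ω₂).im ≤ 0 := by
    have : cubeRoot * ω₂ = -1 := by
      rw [cubeRoot, hω₂def, ← Complex.exp_add]
      rw [show (2 * (Real.pi:ℂ) * Complex.I / 3 + (Real.pi:ℂ) * Complex.I / 3)
          = (Real.pi:ℂ) * Complex.I by ring]
      exact Complex.exp_pi_mul_I
    rw [this]; simp
  have hα2ω₂ : (cubeRoot ^ 2 * ω₂).im ≤ 0 := by
    have : cubeRoot ^ 2 * ω₂ = Complex.exp (((-(Real.pi / 3) : ℝ) : ℂ) * Complex.I) := by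
      rw [hcr2, hω₂def, ← Complex.exp_add]
      rw [show (4 * (Real.pi:ℂ) * Complex.I / 3 + (Real.pi:ℂ) * Complex.I / 3)
          = ((-(Real.pi / 3) : ℝ) : ℂ) * Complex.I + 2 * (Real.pi:ℂ) * Complex.I by
        push_cast; ring]
      rw [Complex.exp_add, Complex.exp_two_pi_mul_I, mul_one]
    rw [this, Complex.exp_ofReal_mul_I_im, Real.sin_neg, neg_nonpos]
    exact Real.sin_nonneg_of_nonneg_of_le_pi (by positivity) (by linarith)
  obtain ⟨hint1, heq1⟩ := ray_zeta f hfc hsupp x hx ω₁ him1 hαω₁ hα2ω₁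
  obtain ⟨hint2, heq2⟩ := ray_zeta f hfc hsupp x hx ω₂ him2 hαω₂ hα2ω₂
  have t1 : Tendsto (fun R : ℝ => ∫ r in Ioo (0:ℝ) R,
      Complex.exp (Complex.I * (↑r * ω₁) * ↑x) * zeta1 f (↑r * ω₁) * ω₁) atTop
      (nhds (∫ r in Ioi (0:ℝ),
        Complex.exp (Complex.I * (↑r * ω₁) * ↑x) * zeta1 f (↑r * ω₁) * ω₁)) := by
    refine (intervalIntegral_tendsto_integral_Ioi 0 hint1 tendsto_id).congr' ?_
    filter_upwards [eventually_ge_atTop (0:ℝ)] with R hR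
    simp only [id_eq]
    rw [intervalIntegral.integral_of_le hR, MeasureTheory.integral_Ioc_eq_integral_Ioo]
  have t2 : Tendsto (fun R : ℝ => ∫ r in Ioo (0:ℝ) R,
      Complex.exp (Complex.I * (↑r * ω₂) * ↑x) * zeta1 f (↑r * ω₂) * ω₂) atTop
      (nhds (∫ r in Ioi (0:ℝ),
        Complex.exp (Complex.I * (↑r * ω₂) * ↑x) * zeta1 f (↑r * ω₂) * ω₂)) := by
    refine (intervalIntegral_tendsto_integral_Ioi 0 hint2 tendsto_id).congr' ?_
    filter_upwards [eventually_ge_atTop (0:ℝ)] with R hR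
    simp only [id_eq]
    rw [intervalIntegral.integral_of_le hR, MeasureTheory.integral_Ioc_eq_integral_Ioo]
  have h := t1.sub t2
  rw [heq1, heq2, sub_self] at h
  exact h
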